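/- arXiv:1203.6615 — 2 statements merged into one kernel-verified Lean document; each statement's English description precedes it below -/
import Mathlib

section
/- Let K be a field of characteristic zero and H ∈ K[x_1,...,x_n]ⁿ. If there exists T ∈ GL_n(K) such that the Jacobian matrix of T⁻¹H(Tx) is block lower triangular with r zero square diagonal blocks (sizes s_1,...,s_r ≥ 1), then (JH)|_{x=y⁽ʳ⁾} · (JH)|_{x=y⁽ʳ⁻¹⁾} ··· (JH)|_{x=y⁽¹⁾} = 0 for fresh indeterminate tuples y⁽ⁱ⁾. -/
open MvPolynomial

/-- Substitute the `i`-th fresh tuple of indeterminates for `x` in every entry of `M`. -/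
noncomputable def substN {K : Type} [CommRing K] {n m : ℕ}
    (M : Matrix (Fin m) (Fin m) (MvPolynomial (Fin n) K)) (i : ℕ) :
    Matrix (Fin m) (Fin m) (MvPolynomial (ℕ × Fin n) K) :=
  M.map (rename fun k => (i, k))

/-- The product `M|_{x=y⁽ʳ⁾} ⬝ ⋯ ⬝ M|_{x=y⁽¹⁾}` (fresh tuples indexed `r-1, …, 0`). -/
noncomputable def prodSubst {K : Type} [CommRing K] {n m : ℕ}
    (M : Matrix (Fin m) (Fin m) (MvPolynomial (Fin n) K)) (r : ℕ) :
    Matrix (Fin m) (Fin m) (MvPolynomial (ℕ × Fin n) K) :=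
  ((List.range r).reverse.map (substN M)).prod

/-- The Jacobian matrix `(∂H_i/∂x_j)` of a polynomial map `H`. -/
noncomputable def jac {K : Type} [CommRing K] {n : ℕ}
    (H : Fin n → MvPolynomial (Fin n) K) :
    Matrix (Fin n) (Fin n) (MvPolynomial (Fin n) K) :=
  Matrix.of fun i j => pderiv j (H i)

/-- The polynomial map `T⁻¹ ∘ H ∘ T`, i.e. `x ↦ T⁻¹·H(T·x)`. -/
noncomputable def conjH {K : Type} [Field K] {n : ℕ}
    (T : Matrix (Fin n) (Fin n) K) (H : Fin n → MvPolynomial (Fin n) K) :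
    Fin n → MvPolynomial (Fin n) K :=
  fun i => ∑ j, C (T⁻¹ i j) * aeval (fun l => ∑ k, C (T l k) * X k) (H j)

/-!
By the chain rule, `J(T⁻¹H(Tx)) = T⁻¹ · (JH)(Tx) · T`. Substituting the fresh tuples `y⁽ⁱ⁾`, the
product for `T⁻¹H(Tx)` is therefore the conjugate by `T` of the product for `H` in which every
`y⁽ⁱ⁾` is replaced by `T y⁽ⁱ⁾`. The former is a product of `r` strictly block lower triangular
matrices with `r` blocks, hence zero, and the change of variables `y⁽ⁱ⁾ ↦ T y⁽ⁱ⁾` is invertible.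
-/

lemma pderiv_aeval {R σ τ : Type*} [CommRing R] [Fintype σ] [DecidableEq σ] [DecidableEq τ]
    (f : σ → MvPolynomial τ R) (b : τ) (p : MvPolynomial σ R) :
    pderiv b (aeval f p) = ∑ k, aeval f (pderiv k p) * pderiv b (f k) := by
  induction p using MvPolynomial.induction_on with
  | C a => simp
  | add p q hp hq => simp only [map_add, hp, hq, add_mul, Finset.sum_add_distrib]
  | mul_X p k hp =>
    simp only [map_mul, aeval_X, Derivation.leibniz, smul_eq_mul, hp, pderiv_X, Pi.single_apply,
      map_add, add_mul, Finset.sum_add_distrib, Finset.mul_sum]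
    simp [mul_assoc]

lemma pderiv_sum_C_mul_X {R σ : Type*} [CommRing R] [Fintype σ] [DecidableEq σ]
    (v : σ → R) (b : σ) :
    pderiv b (∑ k, C (v k) * X k : MvPolynomial σ R) = C (v b) := by
  simp [pderiv_X, Pi.single_apply]

lemma jac_conjH {K : Type} [Field K] {n : ℕ} (T : Matrix (Fin n) (Fin n) K)
    (H : Fin n → MvPolynomial (Fin n) K) :
    jac (conjH T H) =
      T⁻¹.map C * (jac H).map (aeval fun l => ∑ k, C (T l k) * X k) * T.map C := by
  refine Matrix.ext fun a b => ?_
  simp only [jac, conjH, Matrix.of_apply, map_sum, pderiv_C_mul]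
  simp_rw [pderiv_aeval, pderiv_sum_C_mul_X]
  simp only [Matrix.of_apply, Matrix.mul_apply, Matrix.map_apply, Finset.mul_sum,
    Finset.sum_mul]
  rw [Finset.sum_comm]
  ring_nf

/-- The linear change of variables `x ↦ T x`, performed on every tuple `(x_{i,k})_k` at once. -/
noncomputable def linSubst {R ι σ : Type*} [CommRing R] [Fintype σ] (T : Matrix σ σ R) :
    MvPolynomial (ι × σ) R →ₐ[R] MvPolynomial (ι × σ) R :=
  aeval fun p => ∑ k, C (T p.2 k) * X (p.1, k)

lemma linSubst_comp_linSubst {R ι σ : Type*} [CommRing R] [Fintype σ] (A B : Matrix σ σ R) :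
    (linSubst (ι := ι) A).comp (linSubst B) = linSubst (B * A) := by
  refine MvPolynomial.algHom_ext fun p => ?_
  simp only [linSubst, AlgHom.comp_apply, aeval_X, map_sum, map_mul, aeval_C, Matrix.mul_apply,
    Finset.mul_sum, Finset.sum_mul]
  rw [Finset.sum_comm]
  simp [mul_assoc]

lemma linSubst_one {R ι σ : Type*} [CommRing R] [Fintype σ] [DecidableEq σ] :
    linSubst (ι := ι) (1 : Matrix σ σ R) = AlgHom.id R _ := by
  refine MvPolynomial.algHom_ext fun p => ?_
  simp [linSubst, Matrix.one_apply]

lemma linSubst_injective {R ι σ : Type*} [CommRing R] [Fintype σ] [DecidableEq σ]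
    {A B : Matrix σ σ R} (h : A * B = 1) : Function.Injective (linSubst (ι := ι) A) := by
  refine Function.LeftInverse.injective (g := linSubst B) fun p => ?_
  rw [← AlgHom.comp_apply, linSubst_comp_linSubst, h, linSubst_one, AlgHom.id_apply]

lemma rename_comp_aeval_linear {R ι σ : Type*} [CommRing R] [Fintype σ] (T : Matrix σ σ R)
    (i : ι) :
    (rename (Prod.mk i)).comp (aeval fun l => ∑ k, C (T l k) * X k) =
      (linSubst T).comp (rename (R := R) (Prod.mk i)) := by
  refine MvPolynomial.algHom_ext fun l => ?_
  simp [linSubst]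

lemma substN_jac_conjH {K : Type} [Field K] {n : ℕ} (T : Matrix (Fin n) (Fin n) K)
    (H : Fin n → MvPolynomial (Fin n) K) (i : ℕ) :
    substN (jac (conjH T H)) i = T⁻¹.map C * (substN (jac H) i).map (linSubst T) * T.map C := by
  have hC (A : Matrix (Fin n) (Fin n) K) :
      (A.map C).map (rename (R := K) (Prod.mk i : Fin n → ℕ × Fin n)) = A.map C := by
    simp [Matrix.map_map, Function.comp_def]
  rw [substN, jac_conjH, Matrix.map_mul, Matrix.map_mul, hC, hC, substN, Matrix.map_map,
    Matrix.map_map]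
  congr 3
  exact congrArg DFunLike.coe (rename_comp_aeval_linear T i)

lemma prodSubst_succ {K : Type} [CommRing K] {n m : ℕ}
    (M : Matrix (Fin m) (Fin m) (MvPolynomial (Fin n) K)) (r : ℕ) :
    prodSubst M (r + 1) = substN M r * prodSubst M r := by
  simp [prodSubst, List.range_succ]

lemma prodSubst_eq_conj {K : Type} [CommRing K] {n m : ℕ}
    {M N : Matrix (Fin m) (Fin m) (MvPolynomial (Fin n) K)}
    (φ : MvPolynomial (ℕ × Fin n) K →+* MvPolynomial (ℕ × Fin n) K)
    (U : (Matrix (Fin m) (Fin m) (MvPolynomial (ℕ × Fin n) K))ˣ)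
    (h : ∀ i, substN N i = U.val * (substN M i).map φ * U⁻¹.val) (r : ℕ) :
    prodSubst N r = U.val * (prodSubst M r).map φ * U⁻¹.val := by
  induction r with
  | zero => simp [prodSubst, Matrix.map_one]
  | succ r ih => simp [prodSubst_succ, h, ih, Matrix.map_mul, mul_assoc]

lemma Matrix.list_prod_apply_eq_zero_of_strictBlockLower {R ι : Type*} [Semiring R] [Fintype ι]
    [DecidableEq ι] (b : ι → ℕ) (L : List (Matrix ι ι R))
    (hL : ∀ M ∈ L, ∀ i j, b i ≤ b j → M i j = 0) {i j : ι} (hij : b i < b j + L.length) :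
    L.prod i j = 0 := by
  induction L generalizing i with
  | nil =>
    have : i ≠ j := by rintro rfl; simp at hij
    simp [Matrix.one_apply_ne this]
  | cons M L ih =>
    rw [List.prod_cons, Matrix.mul_apply]
    refine Finset.sum_eq_zero fun k _ => ?_
    rcases le_or_gt (b i) (b k) with hik | hki
    · rw [hL M List.mem_cons_self i k hik, zero_mul]
    · rw [ih (fun N hN => hL N (List.mem_cons_of_mem M hN)) (by grind), mul_zero]

lemma prodSubst_eq_zero_of_strictBlockLower {K : Type} [CommRing K] {n m : ℕ}
    (M : Matrix (Fin m) (Fin m) (MvPolynomial (Fin n) K)) (r : ℕ) (b : Fin m → ℕ)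
    (hb : ∀ i, b i < r) (hM : ∀ i j, b i ≤ b j → M i j = 0) :
    prodSubst M r = 0 := by
  refine Matrix.ext fun i j => Matrix.list_prod_apply_eq_zero_of_strictBlockLower b _ ?_ ?_
  · simp only [List.mem_map, List.mem_reverse, List.mem_range]
    rintro _ ⟨k, -, rfl⟩ i j hij
    simp [substN, hM i j hij]
  · simpa using Nat.lt_add_left (b j) (hb i)

theorem stmt4_general {K : Type} [Field K] {n r : ℕ}
    (H : Fin n → MvPolynomial (Fin n) K)
    (T : Matrix (Fin n) (Fin n) K) (hT : IsUnit T.det)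
    (blk : Fin n → Fin r)
    (hzero : ∀ i j : Fin n, blk i ≤ blk j → jac (conjH T H) i j = 0) :
    prodSubst (jac H) r = 0 := by
  let U := Units.map (C : K →+* MvPolynomial (ℕ × Fin n) K).mapMatrix.toMonoidHom
    (Matrix.nonsingInvUnit T hT)⁻¹
  have hconj : prodSubst (jac (conjH T H)) r =
      U.val * (prodSubst (jac H) r).map (linSubst T) * U⁻¹.val :=
    prodSubst_eq_conj (linSubst T).toRingHom U (substN_jac_conjH T H) r
  have hvanish : prodSubst (jac (conjH T H)) r = 0 :=
    prodSubst_eq_zero_of_strictBlockLower _ r (fun i => blk i) (fun i => (blk i).isLt)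
      fun i j hij => hzero i j (Fin.le_iff_val_le_val.mpr hij)
  have hmap : (prodSubst (jac H) r).map (linSubst T) = 0 :=
    U.mul_right_eq_zero.mp (U⁻¹.mul_left_eq_zero.mp (hconj ▸ hvanish))
  refine Matrix.map_injective (linSubst_injective (Matrix.mul_nonsing_inv T hT)) ?_
  simpa using hmap

theorem stmt4 {K : Type} [Field K] [CharZero K] {n r : ℕ}
    (H : Fin n → MvPolynomial (Fin n) K)
    (T : Matrix (Fin n) (Fin n) K) (hT : IsUnit T.det)
    (blk : Fin n → Fin r) (hmono : Monotone blk)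
    (hpos : ∀ k : Fin r, ∃ i, blk i = k)
    (hzero : ∀ i j : Fin n, blk i ≤ blk j → jac (conjH T H) i j = 0) :
    prodSubst (jac H) r = 0 :=
  stmt4_general H T hT blk hzero
end

section
/- Let D be a division ring, S a set, and M ∈ Mat_m(D^S) a matrix of functions from S to D with m ≥ 1. If there exists r ∈ ℕ such that M|_{v_r}·M|_{v_{r−1}}···M|_{v_1} = 0 for all v_1,...,v_r ∈ S, then M|_{v_m}·M|_{v_{m−1}}···M|_{v_1} = 0 for all v_1,...,v_m ∈ S. -/
/-!
Let `W k ≤ D^m` be the span of the rows of all products of length `k`. Then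
`W (k + 1) = ⨆ s, W k ⬝ M|_s`, so `W k` is the `k`-th iterate at `⊤` of a monotone operator on
subspaces. This chain decreases, and where it stalls it sits at a fixed point, which lies below
`W r = 0`. So it drops in dimension at every step until it reaches `0`, hence within `m` steps.
-/

/-- Evaluate every entry of a matrix of functions `S → R` at `v : S`. -/
def evalM {R : Type} [Ring R] {S : Type} {m : ℕ}
    (M : Matrix (Fin m) (Fin m) (S → R)) (v : S) : Matrix (Fin m) (Fin m) R :=
  M.map fun f => f v

/-- The product `M|_{v_r} ⬝ M|_{v_{r-1}} ⬝ ⋯ ⬝ M|_{v_1}` (0-based: `v` indexed `r-1, …, 0`). -/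
def evalProd {R : Type} [Ring R] {S : Type} {m r : ℕ}
    (M : Matrix (Fin m) (Fin m) (S → R)) (v : Fin r → S) : Matrix (Fin m) (Fin m) R :=
  ((List.ofFn fun i => evalM M (v i)).reverse).prod

theorem Function.IsFixedPt.eq_bot_of_iterate_top_eq_bot {α : Type*} [PartialOrder α]
    [OrderBot α] [OrderTop α] {f : α → α} (hf : Monotone f) {x : α} (hx : Function.IsFixedPt f x)
    {r : ℕ} (hr : f^[r] ⊤ = ⊥) : x = ⊥ :=
  le_bot_iff.mp <| calc
    x = f^[r] x := (hx.iterate r).symm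
    _ ≤ f^[r] ⊤ := hf.iterate r le_top
    _ = ⊥ := hr

theorem Submodule.iterate_finrank_top_eq_bot {K V : Type*} [DivisionRing K] [AddCommGroup V]
    [Module K V] [FiniteDimensional K V] {F : Submodule K V → Submodule K V} (hF : Monotone F)
    {r : ℕ} (hr : F^[r] ⊤ = ⊥) : F^[Module.finrank K V] ⊤ = ⊥ := by
  have hanti : Antitone fun k => F^[k] ⊤ := hF.antitone_iterate_of_map_le le_top
  have hdrop : ∀ k, F^[k] ⊤ = ⊥ ∨ Module.finrank K (F^[k] ⊤) + k ≤ Module.finrank K V := by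
    intro k
    induction k with
    | zero => exact .inr (Submodule.finrank_le _)
    | succ k ih =>
      have hle : F^[k + 1] ⊤ ≤ F^[k] ⊤ := hanti k.le_succ
      rcases ih with hbot | hk
      · exact .inl (le_bot_iff.mp (hbot ▸ hle))
      rcases hle.lt_or_eq with hlt | heq
      · have := Submodule.finrank_lt_finrank_of_lt hlt
        exact .inr (by omega)
      · have hfix : Function.IsFixedPt F (F^[k] ⊤) := by
          rwa [Function.IsFixedPt, ← Function.iterate_succ_apply' F k]
        exact .inl (heq.trans (hfix.eq_bot_of_iterate_top_eq_bot hF hr))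
  rcases hdrop (Module.finrank K V) with hbot | hk
  · exact hbot
  · exact Submodule.finrank_eq_zero.mp (by omega)

section ProductRowSpace

variable {R : Type} [Ring R] {S : Type} {m : ℕ} (M : Matrix (Fin m) (Fin m) (S → R))

lemma evalProd_succ {r : ℕ} (v : Fin (r + 1) → S) :
    evalProd M v = evalProd M (Fin.tail v) * evalM M (v 0) := by
  simp [evalProd, List.ofFn_succ, Fin.tail]

lemma evalProd_zero (v : Fin 0 → S) : evalProd M v = 1 := by
  simp [evalProd]

def productRowSpace (k : ℕ) : Submodule R (Fin m → R) :=
  ⨆ v : Fin k → S, LinearMap.range (evalProd M v).vecMulLinear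

def rowStep (U : Submodule R (Fin m → R)) : Submodule R (Fin m → R) :=
  ⨆ s, U.map (evalM M s).vecMulLinear

lemma rowStep_monotone : Monotone (rowStep M) :=
  fun _ _ h => iSup_mono fun _ => Submodule.map_mono h

lemma productRowSpace_zero : productRowSpace M 0 = ⊤ := by
  simp only [productRowSpace, evalProd_zero, iSup_const, LinearMap.range_eq_top]
  exact fun x => ⟨x, Matrix.vecMul_one x⟩

lemma productRowSpace_succ (k : ℕ) :
    productRowSpace M (k + 1) = rowStep M (productRowSpace M k) := by
  simp only [productRowSpace, rowStep, Submodule.map_iSup, ← LinearMap.range_comp]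
  rw [← (Fin.consEquiv fun _ => S).iSup_comp, iSup_prod]
  congr! with s v
  refine LinearMap.ext fun x => ?_
  simp [Fin.consEquiv, evalProd_succ, Matrix.vecMul_vecMul]

lemma productRowSpace_eq_iterate (k : ℕ) : productRowSpace M k = (rowStep M)^[k] ⊤ := by
  induction k with
  | zero => exact productRowSpace_zero M
  | succ k ih => rw [productRowSpace_succ, ih, Function.iterate_succ_apply']

lemma productRowSpace_eq_bot_iff {k : ℕ} :
    productRowSpace M k = ⊥ ↔ ∀ v : Fin k → S, evalProd M v = 0 := by
  simp only [productRowSpace, iSup_eq_bot, LinearMap.range_eq_bot]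
  refine forall_congr' fun v => ⟨fun h => ?_, fun h => by simp [h]⟩
  ext i j
  simpa using congr_fun (LinearMap.congr_fun h (Pi.single i 1)) j

end ProductRowSpace

theorem stmt12_general {D : Type} [DivisionRing D] {S : Type} {m : ℕ}
    (M : Matrix (Fin m) (Fin m) (S → D))
    (h : ∃ r : ℕ, ∀ v : Fin r → S, evalProd M v = 0) :
    ∀ v : Fin m → S, evalProd M v = 0 := by
  obtain ⟨r, hr⟩ := h
  rw [← productRowSpace_eq_bot_iff, productRowSpace_eq_iterate] at hr ⊢
  simpa using Submodule.iterate_finrank_top_eq_bot (rowStep_monotone M) hr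

theorem stmt12 {D : Type} [DivisionRing D] {S : Type} {m : ℕ} (hm : 1 ≤ m)
    (M : Matrix (Fin m) (Fin m) (S → D))
    (h : ∃ r : ℕ, ∀ v : Fin r → S, evalProd M v = 0) :
    ∀ v : Fin m → S, evalProd M v = 0 :=
  stmt12_general M h
end
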